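/- Let D be a bipartite tournament of order n. There exists a tournament completion of D with exactly one augmented 3-dicycle if and only if D is acyclic and D is isomorphic to neither D_{X^1_n} nor D_{X^2_n}. -/

import Mathlib

/-- `f` gives the partite set (as a `Bool`) of each vertex; `A` is the arc relation.
`IsBipTournament f A` says `A` is an orientation of the complete bipartite graph with
(nonempty) partite sets `f ⁻¹ true` and `f ⁻¹ false`. -/
def IsBipTournament {V : Type*} (f : V → Bool) (A : V → V → Prop) : Prop :=
  (∃ v, f v = true) ∧ (∃ v, f v = false) ∧
  (∀ u v, f u = f v → ¬ A u v) ∧ (∀ u v, f u ≠ f v → (A u v ↔ ¬ A v u))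

/-- `T` is a tournament (on the whole vertex type). -/
def IsTournament {V : Type*} (T : V → V → Prop) : Prop :=
  (∀ v, ¬ T v v) ∧ ∀ u v, u ≠ v → (T u v ↔ ¬ T v u)

/-- `T` is a tournament completion of the digraph with arc relation `A`. -/
def IsCompletion {V : Type*} (A T : V → V → Prop) : Prop :=
  IsTournament T ∧ ∀ u v, A u v → T u v
/-- Cyclic successor in `Fin k`. -/
def cyc {k : ℕ} (i : Fin k) : Fin k :=
  ⟨(i.val + 1) % k, Nat.mod_lt _ (lt_of_le_of_lt (Nat.zero_le _) i.isLt)⟩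

/-- `c` lists the vertices of a directed cycle of length `k` in the digraph `A`. -/
def IsDicycle {V : Type*} (A : V → V → Prop) (k : ℕ) (c : Fin k → V) : Prop :=
  2 ≤ k ∧ Function.Injective c ∧ ∀ i, A (c i) (c (cyc i))

/-- The digraph `A` has no directed cycle. -/
def Acyclic {V : Type*} (A : V → V → Prop) : Prop :=
  ¬ ∃ (k : ℕ) (c : Fin k → V), IsDicycle A k c
/-- Increasing enumeration (0-indexed) of `{6i-5, 6i-3, 6i-2, 6i | i ∈ ℤ⁺}`,
i.e. `1, 3, 4, 6, 7, 9, 10, 12, …`; the set `X¹ₙ` consists of `x1fun 0, …, x1fun (n-1)`. -/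
def x1fun (i : ℕ) : ℕ := 6 * (i / 4) + [1, 3, 4, 6].getD (i % 4) 0

/-- Increasing enumeration (0-indexed) of `{6i-5, 6i-4, 6i-2, 6i-1 | i ∈ ℤ⁺}`,
i.e. `1, 2, 4, 5, 7, 8, 10, 11, …`; the set `X²ₙ` consists of `x2fun 0, …, x2fun (n-1)`. -/
def x2fun (i : ℕ) : ℕ := 6 * (i / 4) + [1, 2, 4, 5].getD (i % 4) 0

/-- `c` is an augmented 3-dicycle of a completion `T` of `A`: a directed 3-cycle of
`T` using at least one arc not in `A`. -/
def Aug3 {V : Type*} (A T : V → V → Prop) (c : Fin 3 → V) : Prop :=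
  Function.Injective c ∧ (∀ i, T (c i) (c (i + 1))) ∧ ∃ i, ¬ A (c i) (c (i + 1))


/-!
Every 3-cycle of a completion of a bipartite tournament `D` uses an arc outside `D` (an odd
cycle cannot alternate between two parts), so the question is when some completion has exactly
one 3-cycle, up to its vertex set.

If `D` has a dicycle it has a 4-cycle `a → b → c → d → a`, and however the chords `ac` and `bd`
are completed they close two 3-cycles with different vertex sets. So `D` is acyclic; numbering
its vertices along a topological order turns `D` into the digraph on `0, …, n - 1` with arcs
`i → j` for `i < j` of different colours. If two vertices at distance 2 have the same colour,
reversing the arc between them in the transitive tournament creates exactly one 3-cycle.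
Otherwise the colours alternate at distance 2, which is exactly the colour pattern of `X¹ₙ` or
`X²ₙ`. In that case every 3-cycle of a completion contains a backward arc `y → x` with
`y ≥ x + 3` between vertices of equal colour, and two vertices of the other colour strictly
between `x` and `y` give two different 3-cycles.
-/

open Relation

section Triangles

variable {V W : Type*} {T : V → V → Prop} {x y z : V}

def IsTriangle (T : V → V → Prop) (x y z : V) : Prop :=
  T x y ∧ T y z ∧ T z x

theorem IsTriangle.rotate (h : IsTriangle T x y z) : IsTriangle T y z x :=
  ⟨h.2.1, h.2.2, h.1⟩

theorem IsTriangle.ne (hT : ∀ v, ¬ T v v) (h : IsTriangle T x y z) : x ≠ y ∧ y ≠ z ∧ z ≠ x := by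
  refine ⟨?_, ?_, ?_⟩ <;> rintro rfl
  exacts [hT _ h.1, hT _ h.2.1, hT _ h.2.2]

theorem IsTriangle.map {T' : W → W → Prop} (e : T ≃r T') (h : IsTriangle T x y z) :
    IsTriangle T' (e x) (e y) (e z) :=
  ⟨e.map_rel_iff.2 h.1, e.map_rel_iff.2 h.2.1, e.map_rel_iff.2 h.2.2⟩

theorem IsTriangle.exists_rotate_min [LinearOrder V] (hT : ∀ v, ¬ T v v)
    (h : IsTriangle T x y z) :
    ∃ a b c, IsTriangle T a b c ∧ ({a, b, c} : Set V) = {x, y, z} ∧ a < b ∧ a < c := by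
  obtain ⟨hxy, hyz, hzx⟩ := h.ne hT
  have hyzx : ({y, z, x} : Set V) = {x, y, z} := by rw [Set.pair_comm, Set.insert_comm]
  have hzxy : ({z, x, y} : Set V) = {x, y, z} := by rw [Set.insert_comm, Set.pair_comm]
  rcases lt_or_gt_of_ne hxy with hxy | hxy <;> rcases lt_or_gt_of_ne hyz with hyz | hyz <;>
    rcases lt_or_gt_of_ne hzx with hzx | hzx
  all_goals first
    | (refine ⟨x, y, z, h, rfl, ?_, ?_⟩ <;> order)
    | (refine ⟨y, z, x, h.rotate, hyzx, ?_, ?_⟩ <;> order)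
    | (refine ⟨z, x, y, h.rotate.rotate, hzxy, ?_, ?_⟩ <;> order)

def HasUniqueTriangle (T : V → V → Prop) : Prop :=
  ∃ x y z, IsTriangle T x y z ∧
    ∀ x' y' z', IsTriangle T x' y' z' → ({x', y', z'} : Set V) = {x, y, z}

theorem HasUniqueTriangle.set_eq (hu : HasUniqueTriangle T) {x' y' z' : V}
    (h : IsTriangle T x y z) (h' : IsTriangle T x' y' z') :
    ({x, y, z} : Set V) = {x', y', z'} := by
  obtain ⟨a, b, c, -, hu⟩ := hu
  rw [hu _ _ _ h, hu _ _ _ h']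

theorem HasUniqueTriangle.map {T' : W → W → Prop} (e : T ≃r T') (hu : HasUniqueTriangle T) :
    HasUniqueTriangle T' := by
  obtain ⟨x, y, z, h, hu⟩ := hu
  refine ⟨e x, e y, e z, h.map e, fun x' y' z' h' => ?_⟩
  have := congrArg (e '' ·) (hu _ _ _ (h'.map e.symm))
  simpa only [Set.image_insert_eq, Set.image_singleton, RelIso.apply_symm_apply] using this

theorem IsTournament.not_rel (hT : IsTournament T) {u v : V} (huv : T u v) : ¬ T v u :=
  (hT.2 u v (by rintro rfl; exact hT.1 u huv)).1 huv

theorem IsTournament.rel_or_rel (hT : IsTournament T) {u v : V} (huv : u ≠ v) :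
    T u v ∨ T v u :=
  or_iff_not_imp_right.2 (hT.2 u v huv).2

theorem IsTournament.preimage {T : W → W → Prop} (hT : IsTournament T) {e : V → W}
    (he : Function.Injective e) : IsTournament (e ⁻¹'o T) :=
  ⟨fun v => hT.1 (e v), fun u v huv => hT.2 (e u) (e v) (he.ne huv)⟩

theorem IsTournament.not_hasUniqueTriangle_of_cycle4 (hT : IsTournament T) {a b c d : V}
    (hab : T a b) (hbc : T b c) (hcd : T c d) (hda : T d a) : ¬ HasUniqueTriangle T := by
  intro hu
  have hne : ∀ {u v}, T u v → u ≠ v := by rintro u v huv rfl; exact hT.1 u huv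
  have hac : a ≠ c := by rintro rfl; exact hT.not_rel hab hbc
  have hbd : b ≠ d := by rintro rfl; exact hT.not_rel hbc hcd
  -- The chord `ac` closes a triangle through `a` and `c`; the chord `bd` one avoiding `a` or `c`.
  obtain ⟨x, y, z, h, hax, hcx⟩ : ∃ x y z, IsTriangle T x y z ∧
      a ∈ ({x, y, z} : Set V) ∧ c ∈ ({x, y, z} : Set V) := by
    rcases hT.rel_or_rel hac with hac | hca
    · exact ⟨a, c, d, ⟨hac, hcd, hda⟩, by simp, by simp⟩
    · exact ⟨a, b, c, ⟨hab, hbc, hca⟩, by simp, by simp⟩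
  obtain ⟨x', y', z', h', hmiss⟩ : ∃ x y z, IsTriangle T x y z ∧
      (a ∉ ({x, y, z} : Set V) ∨ c ∉ ({x, y, z} : Set V)) := by
    rcases hT.rel_or_rel hbd with hbd | hdb
    · exact ⟨a, b, d, ⟨hab, hbd, hda⟩, .inr (by simp [hac.symm, (hne hbc).symm, hne hcd])⟩
    · exact ⟨b, c, d, ⟨hbc, hcd, hdb⟩, .inl (by simp [hne hab, hac, (hne hda).symm])⟩
  rw [hu.set_eq h h'] at hax hcx
  tauto

def HasUniqueTriangleCompletion (A : V → V → Prop) : Prop :=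
  ∃ T, IsCompletion A T ∧ HasUniqueTriangle T

theorem HasUniqueTriangleCompletion.of_relIso {A : V → V → Prop} {B : W → W → Prop}
    (e : A ≃r B) (h : HasUniqueTriangleCompletion B) : HasUniqueTriangleCompletion A := by
  obtain ⟨T, ⟨hT, hBT⟩, hu⟩ := h
  exact ⟨e ⁻¹'o T, ⟨hT.preimage e.injective, fun u v huv => hBT _ _ (e.map_rel_iff.2 huv)⟩,
    hu.map (RelIso.preimage e.toEquiv T).symm⟩

theorem range_fin_three (c : Fin 3 → V) : Set.range c = {c 0, c 1, c 2} := by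
  ext; simp [Fin.exists_fin_succ, eq_comm]

theorem aug3_iff_isTriangle {f : V → Bool} {A : V → V → Prop}
    (hA : ∀ u v, A u v → f u ≠ f v) (hT : ∀ v, ¬ T v v) (c : Fin 3 → V) :
    Aug3 A T c ↔ IsTriangle T (c 0) (c 1) (c 2) := by
  refine ⟨fun ⟨_, hc, _⟩ => ⟨hc 0, hc 1, hc 2⟩, fun h => ?_⟩
  obtain ⟨h01, h12, h20⟩ := h.ne hT
  refine ⟨?_, fun i => by fin_cases i; exacts [h.1, h.2.1, h.2.2], ?_⟩
  · simp [Function.Injective, Fin.forall_fin_succ, h01, h12, h20, h01.symm, h12.symm, h20.symm]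
  · -- an odd cycle cannot alternate between two parts
    by_contra! hc
    exact (by decide : ∀ a b c : Bool, a ≠ b → b ≠ c → c ≠ a → False) _ _ _
      (hA _ _ (hc 0)) (hA _ _ (hc 1)) (hA _ _ (hc 2))

theorem exists_completion_unique_aug3_iff {f : V → Bool} {A : V → V → Prop}
    (hA : ∀ u v, A u v → f u ≠ f v) :
    (∃ T, IsCompletion A T ∧ ∃ c : Fin 3 → V, Aug3 A T c ∧
      ∀ c', Aug3 A T c' → Set.range c' = Set.range c) ↔ HasUniqueTriangleCompletion A := by
  refine ⟨fun ⟨T, hT, c, hc, hu⟩ => ⟨T, hT, c 0, c 1, c 2,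
      (aug3_iff_isTriangle hA hT.1.1 c).1 hc, fun x y z h => ?_⟩,
    fun ⟨T, hT, x, y, z, h, hu⟩ => ⟨T, hT, ![x, y, z], (aug3_iff_isTriangle hA hT.1.1 _).2 h,
      fun c' hc' => ?_⟩⟩
  · have := hu ![x, y, z] ((aug3_iff_isTriangle hA hT.1.1 _).2 h)
    rw [range_fin_three, range_fin_three] at this
    simpa using this
  · rw [range_fin_three, range_fin_three]
    exact hu _ _ _ ((aug3_iff_isTriangle hA hT.1.1 c').1 hc')

end Triangles

section Bipartite

variable {V : Type*} {f : V → Bool} {A : V → V → Prop}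

theorem IsBipTournament.ne_of_rel (h : IsBipTournament f A) {u v : V} (huv : A u v) :
    f u ≠ f v :=
  fun hf => h.2.2.1 u v hf huv

theorem IsBipTournament.not_rel (h : IsBipTournament f A) {u v : V} (huv : A u v) : ¬ A v u :=
  (h.2.2.2 u v (h.ne_of_rel huv)).1 huv

theorem IsBipTournament.rel_or_rel (h : IsBipTournament f A) {u v : V} (huv : f u ≠ f v) :
    A u v ∨ A v u :=
  or_iff_not_imp_right.2 (h.2.2.2 u v huv).2

theorem IsBipTournament.exists_cycle4_of_transGen (h : IsBipTournament f A) {u : V}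
    (hu : TransGen A u u) : ∃ a b c d, A a b ∧ A b c ∧ A c d ∧ A d a := by
  by_contra! hC
  -- Without 4-cycles, a walk between the parts shortcuts to an arc, one inside a part to a 2-path.
  have shortcut : ∀ v w, TransGen A v w → if f v = f w then ∃ m, A v m ∧ A m w else A v w := by
    intro v w hvw
    induction hvw with
    | single hvw => rwa [if_neg (h.ne_of_rel hvw)]
    | @tail w x _ hwx ih =>
      have hwx' := h.ne_of_rel hwx
      by_cases hvx : f v = f x
      · rw [if_neg (hvx ▸ hwx').symm] at ih
        exact if_pos hvx ▸ ⟨w, ih, hwx⟩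
      · have hvw : f v = f w := by
          cases hv : f v <;> cases hw : f w <;> cases hx : f x <;> simp_all
        obtain ⟨m, hvm, hmw⟩ := if_pos hvw ▸ ih
        exact if_neg hvx ▸ (h.rel_or_rel hvx).resolve_right (hC v m w x hvm hmw hwx)
  obtain ⟨m, hum, hmu⟩ := if_pos rfl ▸ shortcut u u hu
  exact h.not_rel hum hmu

theorem IsBipTournament.isDicycle_four (h : IsBipTournament f A) {a b c d : V} (hab : A a b)
    (hbc : A b c) (hcd : A c d) (hda : A d a) : IsDicycle A 4 ![a, b, c, d] := by
  have hne : ∀ {u v}, A u v → u ≠ v := fun huv he => h.ne_of_rel huv (congrArg f he)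
  have hac : a ≠ c := by rintro rfl; exact h.not_rel hab hbc
  have hbd : b ≠ d := by rintro rfl; exact h.not_rel hbc hcd
  refine ⟨by norm_num, ?_, fun i => by fin_cases i <;> assumption⟩
  simp [Function.Injective, Fin.forall_fin_succ, hne hab, hne hbc, hne hcd, hne hda, hac, hbd,
    (hne hab).symm, (hne hbc).symm, (hne hcd).symm, (hne hda).symm, hac.symm, hbd.symm]

theorem IsDicycle.exists_transGen {k : ℕ} {c : Fin k → V} (hc : IsDicycle A k c) :
    ∃ u, TransGen A u u := by
  obtain ⟨hk, -, harc⟩ := hc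
  have hk0 : 0 < k := by omega
  have reach : ∀ m, TransGen A (c ⟨0, hk0⟩) (c ⟨(m + 1) % k, Nat.mod_lt _ hk0⟩) := by
    intro m
    induction m with
    | zero => exact .single (harc _)
    | succ m ih =>
      refine ih.tail ?_
      convert harc ⟨(m + 1) % k, Nat.mod_lt _ hk0⟩ using 3
      simp [cyc, Nat.add_mod]
  refine ⟨c ⟨0, hk0⟩, ?_⟩
  simpa [Nat.sub_add_cancel hk0] using reach (k - 1)

theorem IsBipTournament.acyclic_iff (h : IsBipTournament f A) :
    Acyclic A ↔ ∀ u, ¬ TransGen A u u := by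
  refine ⟨fun hac u hu => ?_, fun hA ⟨k, c, hc⟩ => ?_⟩
  · obtain ⟨a, b, c, d, hab, hbc, hcd, hda⟩ := h.exists_cycle4_of_transGen hu
    exact hac ⟨4, _, h.isDicycle_four hab hbc hcd hda⟩
  · obtain ⟨u, hu⟩ := hc.exists_transGen
    exact hA u hu

end Bipartite

theorem exists_equiv_fin_of_forall_not_transGen {V : Type*} [Fintype V] {A : V → V → Prop}
    (hA : ∀ u, ¬ TransGen A u u) :
    ∃ σ : V ≃ Fin (Fintype.card V), ∀ u v, A u v → σ u < σ v := by
  have : IsPartialOrder V (ReflTransGen A) :=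
    { refl := fun _ => .refl
      trans := fun _ _ _ => .trans
      antisymm := fun u v huv hvu => by
        rcases reflTransGen_iff_eq_or_transGen.1 huv with rfl | huv
        · rfl
        · exact (hA u (huv.trans_left hvu)).elim }
  obtain ⟨s, hs, hAs⟩ := extend_partialOrder (ReflTransGen A)
  let : LinearOrder V :=
    { le := s
      le_refl := hs.refl
      le_trans := hs.trans
      le_antisymm := hs.antisymm
      le_total := hs.total
      toDecidableLE := Classical.decRel s }
  refine ⟨(monoEquivOfFin V rfl).symm.toEquiv, fun u v huv => ?_⟩
  have hne : u ≠ v := by rintro rfl; exact hA u (.single huv)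
  exact (monoEquivOfFin V rfl).symm.lt_iff_lt.2 (lt_of_le_of_ne (hAs _ _ (.single huv)) hne)

section OrderedBip

variable {n : ℕ} {α : Type*} {p : Fin n → α} {T : Fin n → Fin n → Prop}

/-- `D_X` with `X` numbered increasingly: vertex `i` has colour `p i`, the residue mod 2 of the
`i`-th element of `X`. -/
def orderedBip (p : Fin n → α) (i j : Fin n) : Prop :=
  i < j ∧ p i ≠ p j

def Alternating (p : Fin n → α) : Prop :=
  ∀ i j : Fin n, (j : ℕ) = i + 2 → p i ≠ p j

theorem orderedBip_congr {β : Type*} {q : Fin n → β}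
    (h : ∀ i j, p i = p j ↔ q i = q j) : orderedBip p = orderedBip q := by
  ext i j
  simp only [orderedBip, ne_eq, h]

theorem orderedBip_mod_two_iff {g : ℕ → ℕ} (hg : StrictMono g) {i j : Fin n} :
    orderedBip (fun k : Fin n => g k % 2) i j ↔ g i < g j ∧ g i % 2 ≠ g j % 2 := by
  rw [orderedBip, ← (hg.comp Fin.val_strictMono).lt_iff_lt]
  rfl

def IsBipTournament.relIsoOrderedBip {V : Type*} {f : V → Bool} {A : V → V → Prop}
    (h : IsBipTournament f A) {σ : V ≃ Fin n} (hσ : ∀ u v, A u v → σ u < σ v) :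
    A ≃r orderedBip (f ∘ σ.symm) where
  toEquiv := σ
  map_rel_iff' {u v} := by
    simp only [orderedBip, Function.comp_apply, Equiv.symm_apply_apply]
    exact ⟨fun ⟨hlt, hf⟩ => (h.rel_or_rel hf).resolve_right fun hvu => lt_asymm hlt (hσ v u hvu),
      fun huv => ⟨hσ u v huv, h.ne_of_rel huv⟩⟩

theorem IsCompletion.eq_of_rel_of_lt (hT : IsCompletion (orderedBip p) T) {i j : Fin n}
    (hji : T j i) (hij : i < j) : p i = p j := by
  by_contra hp
  exact hT.1.not_rel hji (hT.2 i j ⟨hij, hp⟩)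

theorem IsCompletion.isTriangle_of_lt_of_lt (hT : IsCompletion (orderedBip p) T) {x w y : Fin n}
    (hyx : T y x) (hxw : x < w) (hwy : w < y) (hw : p x ≠ p w) : IsTriangle T x w y := by
  have hxy := hT.eq_of_rel_of_lt hyx (hxw.trans hwy)
  exact ⟨hT.2 _ _ ⟨hxw, hw⟩, hT.2 _ _ ⟨hwy, fun h => hw (hxy.trans h.symm)⟩, hyx⟩

theorem Alternating.false_of_rel_of_add_two_le (halt : Alternating p)
    (hT : IsCompletion (orderedBip p) T) (hu : HasUniqueTriangle T) {x y : Fin n}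
    (hxy : (x : ℕ) + 2 ≤ y) (hyx : T y x) : False := by
  have hpxy : p x = p y := hT.eq_of_rel_of_lt hyx (by omega)
  obtain ⟨w, hw⟩ : ∃ w : Fin n, (w : ℕ) = x + 2 := ⟨⟨x + 2, by omega⟩, rfl⟩
  have hpw : p x ≠ p w := halt x w hw
  have hwy : w ≠ y := by rintro rfl; exact hpw hpxy
  have := Fin.val_ne_of_ne hwy
  -- a second vertex of the other part strictly between `x` and `y`
  obtain ⟨v, hxv, hvy, hpv, hvw⟩ : ∃ v : Fin n, x < v ∧ v < y ∧ p x ≠ p v ∧ v ≠ w := by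
    obtain ⟨v₁, hv₁⟩ : ∃ v : Fin n, (v : ℕ) = x + 1 := ⟨⟨x + 1, by omega⟩, rfl⟩
    by_cases h1 : p x = p v₁
    · obtain ⟨v₃, hv₃⟩ : ∃ v : Fin n, (v : ℕ) = x + 3 := ⟨⟨x + 3, by omega⟩, rfl⟩
      have h13 : p v₁ ≠ p v₃ := halt v₁ v₃ (by omega)
      have hv₃y : v₃ ≠ y := by rintro rfl; exact h13 (h1.symm.trans hpxy)
      have := Fin.val_ne_of_ne hv₃y
      refine ⟨v₃, by omega, by omega, h1 ▸ h13, ?_⟩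
      exact Fin.ne_of_val_ne (by omega)
    · exact ⟨v₁, by omega, by omega, h1, Fin.ne_of_val_ne (by omega)⟩
  have hset := hu.set_eq (hT.isTriangle_of_lt_of_lt hyx (w := w) (by omega) (by omega) hpw)
    (hT.isTriangle_of_lt_of_lt hyx hxv hvy hpv)
  have hwxvy : w ∈ ({x, v, y} : Set (Fin n)) := hset ▸ by simp
  simp only [Set.mem_insert_iff, Set.mem_singleton_iff] at hwxvy
  rcases hwxvy with rfl | rfl | rfl
  exacts [by omega, hvw rfl, hwy rfl]

theorem Alternating.exists_rel_of_isTriangle (halt : Alternating p)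
    (hT : IsCompletion (orderedBip p) T) {x y z : Fin n} (h : IsTriangle T x y z) :
    ∃ u v : Fin n, (u : ℕ) + 2 ≤ v ∧ T v u := by
  obtain ⟨a, b, c, habc, -, hab, hac⟩ := h.exists_rotate_min hT.1.1
  obtain ⟨-, hbc, -⟩ := habc.ne hT.1.1
  by_cases hc : (a : ℕ) + 2 ≤ c
  · exact ⟨a, c, hc, habc.2.2⟩
  have hcb : c < b := by
    have := Fin.val_ne_of_ne hbc
    omega
  refine ⟨c, b, ?_, habc.2.1⟩
  by_contra hb
  exact halt a b (by omega)
    ((hT.eq_of_rel_of_lt habc.2.2 hac).trans (hT.eq_of_rel_of_lt habc.2.1 hcb))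

theorem Alternating.not_hasUniqueTriangle (halt : Alternating p)
    (hT : IsCompletion (orderedBip p) T) : ¬ HasUniqueTriangle T := by
  intro hu
  obtain ⟨x, y, z, h, -⟩ := id hu
  obtain ⟨u, v, huv, hvu⟩ := halt.exists_rel_of_isTriangle hT h
  exact halt.false_of_rel_of_add_two_le hT hu huv hvu

def flipLt (a b i j : Fin n) : Prop :=
  (i < j ∧ ¬ (i = a ∧ j = b)) ∨ (i = b ∧ j = a)

theorem isTournament_flipLt {a b : Fin n} (hab : a < b) : IsTournament (flipLt a b) := by
  refine ⟨fun v => ?_, fun u v huv => ?_⟩ <;>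
    simp only [flipLt, Fin.ext_iff, Fin.lt_def] at * <;> omega

theorem hasUniqueTriangle_flipLt {a b : Fin n} (hab : (b : ℕ) = a + 2) :
    HasUniqueTriangle (flipLt a b) := by
  obtain ⟨m, hm⟩ : ∃ m : Fin n, (m : ℕ) = a + 1 := ⟨⟨a + 1, by omega⟩, rfl⟩
  refine ⟨a, m, b, ?_, fun x y z h => ?_⟩
  · refine ⟨?_, ?_, ?_⟩ <;>
      simp only [flipLt, Fin.ext_iff, Fin.lt_def, true_and, and_true, or_true] <;> omega
  obtain ⟨x', y', z', ⟨h1, h2, h3⟩, hset, hxy, hxz⟩ :=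
    h.exists_rotate_min (isTournament_flipLt (by omega)).1
  have : x' = a ∧ y' = m ∧ z' = b := by
    simp only [flipLt, Fin.ext_iff, Fin.lt_def] at *; omega
  rw [← hset, this.1, this.2.1, this.2.2]

theorem hasUniqueTriangleCompletion_orderedBip_iff :
    HasUniqueTriangleCompletion (orderedBip p) ↔ ¬ Alternating p := by
  refine ⟨fun ⟨T, hT, hu⟩ halt => halt.not_hasUniqueTriangle hT hu, fun halt => ?_⟩
  obtain ⟨a, b, hab, hp⟩ : ∃ a b : Fin n, (b : ℕ) = a + 2 ∧ p a = p b := by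
    simpa [Alternating] using halt
  refine ⟨flipLt a b, ⟨isTournament_flipLt (by omega),
    fun i j ⟨hij, hpij⟩ => .inl ⟨hij, ?_⟩⟩, hasUniqueTriangle_flipLt hab⟩
  rintro ⟨rfl, rfl⟩
  exact hpij hp

theorem eq_of_mod_two_eq {β : Type*} {r : Fin n → β}
    (hr : ∀ i j : Fin n, (j : ℕ) = i + 2 → r i = r j) {i j : Fin n} (hij : (i : ℕ) % 2 = j % 2) :
    r i = r j := by
  suffices h : ∀ i : Fin n, r i = r ⟨i % 2, lt_of_le_of_lt (Nat.mod_le _ _) i.2⟩ by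
    rw [h i, h j]
    simp only [hij]
  rintro ⟨k, hk⟩
  induction k using Nat.strong_induction_on with
  | _ k ih =>
    rcases Nat.lt_or_ge k 2 with hk2 | hk2
    · simp only [Nat.mod_eq_of_lt hk2]
    · obtain ⟨k, rfl⟩ : ∃ m, k = m + 2 := ⟨k - 2, by omega⟩
      rw [← hr ⟨k, by omega⟩ _ rfl, ih k (by omega)]
      simp

theorem Alternating.eq_iff_eq {p q : Fin n → Bool} (hp : Alternating p)
    (hq : Alternating q)
    (h01 : ∀ i j : Fin n, (i : ℕ) = 0 → (j : ℕ) = 1 → (p i = p j ↔ q i = q j)) (i j : Fin n) :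
    p i = p j ↔ q i = q j := by
  -- `p` and `q` flip together, so `p ^^ q` is constant along each parity class
  have hr : ∀ i j : Fin n, (j : ℕ) = i + 2 → (p i ^^ q i) = (p j ^^ q j) := by
    intro i j hij
    rw [Bool.eq_not_iff.2 (hp i j hij).symm, Bool.eq_not_iff.2 (hq i j hij).symm]
    simp
  have hconst : (p i ^^ q i) = (p j ^^ q j) := by
    by_cases hij : (i : ℕ) % 2 = j % 2
    · exact eq_of_mod_two_eq hr hij
    obtain ⟨z, hz⟩ : ∃ z : Fin n, (z : ℕ) = 0 := ⟨⟨0, by omega⟩, rfl⟩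
    obtain ⟨o, ho⟩ : ∃ o : Fin n, (o : ℕ) = 1 := ⟨⟨1, by omega⟩, rfl⟩
    have hzo : (p z ^^ q z) = (p o ^^ q o) := by
      have := h01 z o hz ho
      revert this
      cases p z <;> cases p o <;> cases q z <;> cases q o <;> simp
    rcases Nat.mod_two_eq_zero_or_one i with hi | hi
    · rw [eq_of_mod_two_eq hr (i := i) (j := z) (by omega), hzo,
        eq_of_mod_two_eq hr (i := o) (j := j) (by omega)]
    · rw [eq_of_mod_two_eq hr (i := i) (j := o) (by omega), ← hzo,
        eq_of_mod_two_eq hr (i := z) (j := j) (by omega)]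
  revert hconst
  cases p i <;> cases p j <;> cases q i <;> cases q j <;> simp

end OrderedBip

theorem add_two_of_eq_x {g : ℕ → ℕ} (hg : g = x1fun ∨ g = x2fun) (k : ℕ) :
    g (k + 2) = g k + 3 := by
  have h4 : k % 4 < 4 := Nat.mod_lt _ (by norm_num)
  rcases hg with rfl | rfl <;> simp only [x1fun, x2fun] <;>
    interval_cases h : k % 4 <;> simp [Nat.add_mod, h] <;> omega

theorem strictMono_of_eq_x {g : ℕ → ℕ} (hg : g = x1fun ∨ g = x2fun) : StrictMono g := by
  have h01 : g 0 < g 1 ∧ g 1 < g 0 + 3 := by rcases hg with rfl | rfl <;> decide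
  -- consecutive gaps `d` and `3 - d` alternate, starting from `d ∈ {1, 2}`
  have gap : ∀ k, g k < g (k + 1) ∧ g (k + 1) < g k + 3 := by
    intro k
    induction k with
    | zero => exact h01
    | succ k ih =>
      rw [show k + 1 + 1 = k + 2 from rfl, add_two_of_eq_x hg]
      constructor <;> omega
  exact strictMono_nat_of_lt_succ fun k => (gap k).1

theorem alternating_mod_two_of_eq_x {n : ℕ} {g : ℕ → ℕ} (hg : g = x1fun ∨ g = x2fun) :
    Alternating (fun i : Fin n => g i % 2) := by
  intro i j hij
  simp only [hij, add_two_of_eq_x hg]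
  omega

theorem Alternating.exists_x {n : ℕ} {p : Fin n → Bool} (hp : Alternating p) :
    ∃ g, (g = x1fun ∨ g = x2fun) ∧ ∀ i j : Fin n, p i = p j ↔ g i % 2 = g j % 2 := by
  have of_first_two : ∀ g, (g = x1fun ∨ g = x2fun) →
      (∀ i j : Fin n, (i : ℕ) = 0 → (j : ℕ) = 1 → (p i = p j ↔ g i % 2 = g j % 2)) →
      ∀ i j : Fin n, p i = p j ↔ g i % 2 = g j % 2 := by
    intro g hg h01
    have hmod : ∀ i j : Fin n,
        decide (g i % 2 = 1) = decide (g j % 2 = 1) ↔ g i % 2 = g j % 2 := by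
      intro i j
      simp only [decide_eq_decide]
      omega
    have hq : Alternating (fun i : Fin n => decide (g i % 2 = 1)) := fun i j hij => by
      have : g i % 2 ≠ g j % 2 := alternating_mod_two_of_eq_x hg i j hij
      simp only [ne_eq, decide_eq_decide]
      omega
    intro i j
    rw [← hmod]
    exact hp.eq_iff_eq hq (fun i j hi hj => (h01 i j hi hj).trans (hmod i j).symm) i j
  by_cases h01 : ∀ i j : Fin n, (i : ℕ) = 0 → (j : ℕ) = 1 → p i = p j
  · refine ⟨x1fun, .inl rfl, of_first_two _ (.inl rfl) fun i j hi hj => ?_⟩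
    simp [hi, hj, h01 i j hi hj, x1fun]
  · push Not at h01
    obtain ⟨i₀, j₀, hi₀, hj₀, hp₀⟩ := h01
    refine ⟨x2fun, .inr rfl, of_first_two _ (.inr rfl) fun i j hi hj => ?_⟩
    obtain rfl : i = i₀ := Fin.ext (hi.trans hi₀.symm)
    obtain rfl : j = j₀ := Fin.ext (hj.trans hj₀.symm)
    simp [hi, hj, hp₀, x2fun]

/-- A bipartite tournament `D` of order `n` has a tournament completion with exactly
one augmented 3-dicycle iff `D` is acyclic and isomorphic to neither `D_{X¹ₙ}` nor
`D_{X²ₙ}`. -/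
theorem stmt_15 {V : Type*} [Fintype V] (n : ℕ) (hcard : Fintype.card V = n)
    (f : V → Bool) (A : V → V → Prop) (h : IsBipTournament f A) :
    (∃ T : V → V → Prop, IsCompletion A T ∧
      ∃ c : Fin 3 → V, Aug3 A T c ∧
        ∀ c' : Fin 3 → V, Aug3 A T c' → Set.range c' = Set.range c) ↔
    (Acyclic A ∧ ∀ g : ℕ → ℕ, g = x1fun ∨ g = x2fun →
      ¬ ∃ e : V ≃ Fin n, ∀ u v, A u v ↔
          (g (e u) < g (e v) ∧ g (e u) % 2 ≠ g (e v) % 2)) := by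
  subst hcard
  rw [exists_completion_unique_aug3_iff (A := A) fun _ _ => h.ne_of_rel, h.acyclic_iff]
  constructor
  · rintro ⟨T, hT, hu⟩
    refine ⟨fun u huu => ?_, fun g hg ⟨e, he⟩ => ?_⟩
    · obtain ⟨a, b, c, d, hab, hbc, hcd, hda⟩ := h.exists_cycle4_of_transGen huu
      exact hT.1.not_hasUniqueTriangle_of_cycle4 (hT.2 _ _ hab) (hT.2 _ _ hbc) (hT.2 _ _ hcd)
        (hT.2 _ _ hda) hu
    · let eX : A ≃r orderedBip (fun i : Fin _ => g i % 2) :=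
        ⟨e, fun {u v} => (orderedBip_mod_two_iff (strictMono_of_eq_x hg)).trans (he u v).symm⟩
      exact hasUniqueTriangleCompletion_orderedBip_iff.1 (.of_relIso eX.symm ⟨T, hT, hu⟩)
        (alternating_mod_two_of_eq_x hg)
  · rintro ⟨hac, hX⟩
    obtain ⟨σ, hσ⟩ := exists_equiv_fin_of_forall_not_transGen hac
    by_cases halt : Alternating (f ∘ σ.symm)
    · obtain ⟨g, hg, hpg⟩ := halt.exists_x
      refine absurd ⟨σ, fun u v => ?_⟩ (hX g hg)
      exact (h.relIsoOrderedBip hσ).map_rel_iff.symm.trans <|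
        (Iff.of_eq (congrFun₂ (orderedBip_congr hpg) (σ u) (σ v))).trans
          (orderedBip_mod_two_iff (strictMono_of_eq_x hg))
    · exact .of_relIso (h.relIsoOrderedBip hσ) (hasUniqueTriangleCompletion_orderedBip_iff.2 halt)
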